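/- Let D=(V,A) be an (S,f)-proper directed graph, D_+ the graph obtained from D by adding opt_D parallel copies of every arc of A, with arc set A_+* for D_+*, and let w: A_+* → ℝ≥0 be the weight function that is 0 on arcs of A* and 1 on all added copies. If I ⊆ A_+* is a complete D_+*-intersection, then w(I) ≥ opt_D, with equality if and only if A* ⊆ I. -/

import Mathlib

open Finset

attribute [local instance] Classical.propDecidable

universe u v

/-- One step from `u` to `w` along an arc belonging to `P`. -/
def ArcStep {V E : Type} (tl hd : E → V) (P : Set E) (u w : V) : Prop :=
  ∃ e ∈ P, tl e = u ∧ hd e = w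

/-- Directed reachability from `u` to `w` using only arcs in `P`. -/
def ArcReach {V E : Type} (tl hd : E → V) (P : Set E) (u w : V) : Prop :=
  Relation.ReflTransGen (ArcStep tl hd P) u w

/-- Connectivity in the underlying undirected graph, using only arcs in `P`. -/
def UConn {V E : Type} (tl hd : E → V) (P : Set E) (u w : V) : Prop :=
  Relation.ReflTransGen (fun a b => ArcStep tl hd P a b ∨ ArcStep tl hd P b a) u w

/-- `R_D(v)`: the set of specified vertices (in `S`) reachable from `v`. -/
noncomputable def RD {V E : Type} (tl hd : E → V) (S : Finset V) (v : V) : Finset V :=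
  S.filter (fun s => ArcReach tl hd Set.univ v s)

/-- `f(R_D(v))`. -/
noncomputable def fR {V E : Type} (tl hd : E → V) (S : Finset V) (f : V → ℕ) (v : V) : ℕ :=
  ∑ s ∈ RD tl hd S v, f s

/-- `T` is an in-tree rooted at `root` spanning the vertex set `span`:
every non-root vertex of `span` has a unique outgoing arc in `T`, the root has none,
all arcs stay inside `span`, and every vertex of `span` reaches the root within `T`. -/
structure IsInTree {V E : Type} (tl hd : E → V) (root : V) (span : Set V)
    (T : Finset E) : Prop where
  mem_tail : ∀ e ∈ T, tl e ∈ span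
  mem_head : ∀ e ∈ T, hd e ∈ span
  root_mem : root ∈ span
  out_unique : ∀ v ∈ span, v ≠ root → ∃! e, e ∈ T ∧ tl e = v
  root_no_out : ∀ e ∈ T, tl e ≠ root
  reaches_root : ∀ v ∈ span, ArcReach tl hd (↑T : Set E) v root

/-- Index type for a `D`-canonical family: for each `s ∈ S` there are `f s` indices. -/
def TreeIdx {V : Type} (S : Finset V) (f : V → ℕ) : Type :=
  Σ s : {x : V // x ∈ S}, Fin (f s.1)

noncomputable instance {V : Type} (S : Finset V) (f : V → ℕ) : Fintype (TreeIdx S f) := by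
  unfold TreeIdx; infer_instance

/-- The family `T` is a `D`-canonical set of in-trees: for each `s ∈ S` and each
`j < f s`, the corresponding member is an in-tree rooted at `s` spanning the set of
vertices from which `s` is reachable. -/
def IsCanonical {V E : Type} (tl hd : E → V) (S : Finset V) (f : V → ℕ)
    (T : TreeIdx S f → Finset E) : Prop :=
  ∀ i : TreeIdx S f,
    IsInTree tl hd i.1.1 {v | ArcReach tl hd Set.univ v i.1.1} (T i)

/-- The family covers all arcs. -/
def CoversAll {V E : Type} {S : Finset V} {f : V → ℕ}
    (T : TreeIdx S f → Finset E) : Prop :=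
  ∀ e : E, ∃ i, e ∈ T i

/-- The members of the family are pairwise arc-disjoint. -/
def ArcDisjointFam {V E : Type} {S : Finset V} {f : V → ℕ}
    (T : TreeIdx S f → Finset E) : Prop :=
  ∀ i j, i ≠ j → Disjoint (T i) (T j)

/-- Tail map of `D*`: vertices are `Option V` (`none` is the apex `s*`); arcs are the
arcs of `D` together with, for each `s ∈ S`, `f s` parallel arcs from `s` to `s*`. -/
def starTail {V E : Type} (tl : E → V) (S : Finset V) (f : V → ℕ) :
    E ⊕ TreeIdx S f → Option V :=
  Sum.elim (fun e => some (tl e)) (fun p => some p.1.1)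

/-- Head map of `D*`. -/
def starHead {V E : Type} (hd : E → V) (S : Finset V) (f : V → ℕ) :
    E ⊕ TreeIdx S f → Option V :=
  Sum.elim (fun e => some (hd e)) (fun _ => none)

/-- `λ(u,w) ≥ k`: every cut separating `u` from `w` contains at least `k` arcs. -/
def LambdaGe {V' E' : Type} (tl hd : E' → V') (u w : V') (k : ℕ) : Prop :=
  ∀ W : Set V', u ∈ W → w ∉ W → k ≤ Nat.card {e : E' // tl e ∈ W ∧ hd e ∉ W}

/-- `D` is `(S,f)`-proper: `|δ_{D*}(v)| ≤ f(R_D(v))` for all `v ∈ V`. -/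
def IsProper {V E : Type} (tl hd : E → V) (S : Finset V) (f : V → ℕ) : Prop :=
  ∀ v : V,
    Nat.card {e : E ⊕ TreeIdx S f // starTail tl S f e = some v} ≤ fR tl hd S f v

/-- `B` (given by `tB, hB`) is a `D*`-rooted connector:
`λ(v, s*; D* + B) ≥ f(R_D(v))` for every vertex `v`. -/
def IsRootedConnector {V E B : Type} (tl hd : E → V) (S : Finset V) (f : V → ℕ)
    (tB hB : B → V) : Prop :=
  ∀ v : V,
    LambdaGe (starTail (Sum.elim tl tB) S f) (starHead (Sum.elim hd hB) S f)
      (some v) none (fR tl hd S f v)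

/-- Arcs of `B` are parallel to arcs of `A`. -/
def ParallelTo {V E B : Type} (tl hd : E → V) (tB hB : B → V) : Prop :=
  ∀ b : B, ∃ e : E, tl e = tB b ∧ hd e = hB b

/-- `T` is a spanning tree (of the underlying undirected graph) on the vertex set
`span`: all arcs stay inside `span`, `span` is connected via `T`, and
`|T| + 1 = |span|`. -/
def IsSpanTree {V' E' : Type} (tl hd : E' → V') (span : Set V') (T : Finset E') : Prop :=
  (∀ e ∈ T, tl e ∈ span ∧ hd e ∈ span) ∧
  (∀ u ∈ span, ∀ w ∈ span, UConn tl hd (↑T : Set E') u w) ∧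
  T.card + 1 = Nat.card span

/-- The vertex set `V^i_D ∪ {s*}` of `D*`: the apex together with all vertices from
which `s` is reachable in `D`. -/
def starSpan {V E : Type} (tl hd : E → V) (s : V) : Set (Option V) :=
  {x | x = none ∨ ∃ v : V, x = some v ∧ ArcReach tl hd Set.univ v s}

/-- `I` is a complete `D*`-intersection: `I` partitions into sets `J i`
(for `i` ranging over the `f s` copies, `s ∈ S`), each forming a spanning tree of
`V^i_D ∪ {s*}` in `D*`, and `|δ_{D*}(v) ∩ I| = f(R_D(v))` for every `v ∈ V` while no
arc of `I` has tail `s*`. -/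
def CompleteIntersection {V E : Type} (tl hd : E → V) (S : Finset V) (f : V → ℕ)
    (I : Finset (E ⊕ TreeIdx S f)) : Prop :=
  (∃ J : TreeIdx S f → Finset (E ⊕ TreeIdx S f),
    (∀ i j, i ≠ j → Disjoint (J i) (J j)) ∧
    (∀ e, e ∈ I ↔ ∃ i, e ∈ J i) ∧
    (∀ i : TreeIdx S f,
      IsSpanTree (starTail tl S f) (starHead hd S f) (starSpan tl hd i.1.1) (J i))) ∧
  (∀ v : V, (I.filter (fun e => starTail tl S f e = some v)).card = fR tl hd S f v) ∧
  (I.filter (fun e => starTail tl S f e = none)).card = 0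

/-- Weight function on the arcs of `D_+*`: `1` on the added parallel copies and `0`
on the arcs of `A*`. -/
def copyWeight {A C T' : Type} : (A ⊕ C) ⊕ T' → ℕ
  | Sum.inl (Sum.inr _) => 1
  | _ => 0

/-- An arc of `D_+*` belongs to `A*` (i.e., it is not one of the added copies). -/
def isOrig {A C T' : Type} : (A ⊕ C) ⊕ T' → Prop
  | Sum.inl (Sum.inr _) => False
  | _ => True

/- Adding parallel copies of arcs changes neither reachability nor the degree targets
`f(R_D(v))`, so `|I| = ∑_v f(R_D(v)) = opt_D + |A*|`. Since `w(I)` counts the arcs of `I`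
outside `A*`, `w(I) = opt_D + |A*| - |I ∩ A*| ≥ opt_D`, with equality exactly when
`I ∩ A* = A*`. -/

lemma arcStep_add_parallel_copies {V A C : Type} (tl hd : A → V) (g : C → A) :
    ArcStep (Sum.elim tl fun c => tl (g c)) (Sum.elim hd fun c => hd (g c)) Set.univ =
      ArcStep tl hd Set.univ := by
  ext u w
  constructor
  · rintro ⟨a | c, -, htl, hhd⟩
    · exact ⟨a, trivial, htl, hhd⟩
    · exact ⟨g c, trivial, htl, hhd⟩
  · rintro ⟨a, -, htl, hhd⟩
    exact ⟨Sum.inl a, trivial, htl, hhd⟩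

lemma fR_add_parallel_copies {V A C : Type} (tl hd : A → V) (g : C → A) (S : Finset V)
    (f : V → ℕ) :
    fR (Sum.elim tl fun c => tl (g c)) (Sum.elim hd fun c => hd (g c)) S f = fR tl hd S f := by
  funext v
  simp only [fR, RD, ArcReach, arcStep_add_parallel_copies]
  congr!

lemma card_treeIdx {V : Type} (S : Finset V) (f : V → ℕ) :
    Fintype.card (TreeIdx S f) = ∑ s ∈ S, f s := by
  rw [Fintype.card_eq_nat_card]
  unfold TreeIdx
  rw [Nat.card_sigma]
  simp only [Nat.card_eq_fintype_card, Fintype.card_fin]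
  exact sum_coe_sort S f

lemma CompleteIntersection.card_eq_sum_fR {V E : Type} [Fintype V] {tl hd : E → V}
    {S : Finset V} {f : V → ℕ} {I : Finset (E ⊕ TreeIdx S f)}
    (hI : CompleteIntersection tl hd S f I) : #I = ∑ v, fR tl hd S f v := by
  obtain ⟨-, hdeg, hapex⟩ := hI
  rw [card_eq_sum_card_fiberwise (t := univ) fun e _ => mem_univ (starTail tl S f e),
    Fintype.sum_option, hapex, zero_add]
  exact sum_congr rfl fun v _ => hdeg v

lemma card_filter_isOrig {A C T : Type} [Fintype A] [Fintype C] [Fintype T] :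
    #(univ.filter (isOrig : (A ⊕ C) ⊕ T → Prop)) = Fintype.card A + Fintype.card T := by
  rw [card_filter, Fintype.sum_sum_type, Fintype.sum_sum_type]
  simp [isOrig]

lemma sum_copyWeight_eq_card_filter_not_isOrig {A C T : Type} (I : Finset ((A ⊕ C) ⊕ T)) :
    ∑ e ∈ I, copyWeight e = #(I.filter (¬isOrig ·)) := by
  rw [card_filter]
  refine sum_congr rfl ?_
  rintro ((a | c) | t) - <;> simp [copyWeight, isOrig]

lemma card_filter_univ_le_card_filter_iff {α : Type} [Fintype α] (s : Finset α)
    (p : α → Prop) [DecidablePred p] :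
    #(univ.filter p) ≤ #(s.filter p) ↔ ∀ a, p a → a ∈ s := by
  rw [eq_iff_card_ge_of_superset (filter_subset_filter p (subset_univ s))]
  simp only [Finset.ext_iff, mem_filter, mem_univ, true_and]
  exact ⟨fun h a ha => ((h a).1 ha).1, fun h a => ⟨fun ha => ⟨h a ha, ha⟩, And.right⟩⟩

theorem stmt11_general {V A : Type} [Fintype V] [Fintype A]
    (tl hd : A → V) (S : Finset V) (f : V → ℕ)
    (opt : ℕ)
    (hopt : (opt : ℤ) = (∑ v : V, (fR tl hd S f v : ℤ)) -
        ((Fintype.card A : ℤ) + ∑ s ∈ S, (f s : ℤ)))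
    (I : Finset ((A ⊕ A × Fin opt) ⊕ TreeIdx S f))
    (hI : CompleteIntersection (Sum.elim tl (fun p => tl p.1))
      (Sum.elim hd (fun p => hd p.1)) S f I) :
    opt ≤ ∑ e ∈ I, copyWeight e ∧
      (∑ e ∈ I, copyWeight e = opt ↔
        ∀ e : (A ⊕ A × Fin opt) ⊕ TreeIdx S f, isOrig e → e ∈ I) := by
  have hcard : #I = opt + (Fintype.card A + ∑ s ∈ S, f s) := by
    rw [hI.card_eq_sum_fR, fR_add_parallel_copies]
    push_cast [← Int.natCast_inj, hopt]
    ring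
  have hsplit := card_filter_add_card_filter_not (s := I) isOrig
  have horig_le : #(I.filter isOrig) ≤ #(univ.filter isOrig) :=
    card_le_card (filter_subset_filter _ (subset_univ I))
  rw [← card_filter_univ_le_card_filter_iff, sum_copyWeight_eq_card_filter_not_isOrig]
  rw [card_filter_isOrig, card_treeIdx] at horig_le ⊢
  omega

/-- for `(S,f)`-proper `D`, let `D_+` add `opt_D` parallel copies of
every arc and `w` be `0` on `A*`, `1` on the copies. If `I` is a complete
`D_+*`-intersection, then `w(I) ≥ opt_D`, with equality iff `A* ⊆ I`. -/
theorem stmt11 {V A : Type} [Fintype V] [Fintype A]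
    (tl hd : A → V) (S : Finset V) (f : V → ℕ)
    (hproper : IsProper tl hd S f)
    (opt : ℕ)
    (hopt : (opt : ℤ) = (∑ v : V, (fR tl hd S f v : ℤ)) -
        ((Fintype.card A : ℤ) + ∑ s ∈ S, (f s : ℤ)))
    (I : Finset ((A ⊕ A × Fin opt) ⊕ TreeIdx S f))
    (hI : CompleteIntersection (Sum.elim tl (fun p => tl p.1))
      (Sum.elim hd (fun p => hd p.1)) S f I) :
    opt ≤ ∑ e ∈ I, copyWeight e ∧
      (∑ e ∈ I, copyWeight e = opt ↔
        ∀ e : (A ⊕ A × Fin opt) ⊕ TreeIdx S f, isOrig e → e ∈ I) :=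
  stmt11_general tl hd S f opt hopt I hI
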